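/- arXiv:1909.12043 — 2 statements merged into one kernel-verified Lean document; each statement's English description precedes it below -/
import Mathlib

section
/- Let G be a finite non-solvable group and S a finite solvable group. For (x,s) ∈ G × S, the solvabilizer satisfies Sol_{G×S}((x,s)) = Sol_G(x) × S. -/
open Subgroup

def solvabilizer {G : Type*} [Group G] (x : G) : Set G :=
  {g | IsSolvable (closure ({g, x} : Set G))}

def solSet (G : Type*) [Group G] : Set G :=
  {x | ∀ y : G, IsSolvable (closure ({x, y} : Set G))}

/-- `R` is the solvable radical of `G`: the largest solvable normal subgroup. -/
def IsSolvableRadical {G : Type*} [Group G] (R : Subgroup G) : Prop :=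
  IsSolvable R ∧ R.Normal ∧ ∀ N : Subgroup G, N.Normal → IsSolvable N → N ≤ R

/-- The non-solvable graph: vertices are elements outside the solvable radical `R`,
two distinct vertices adjacent iff they generate a non-solvable subgroup. -/
def nonSolvableGraph (G : Type*) [Group G] (R : Subgroup G) :
    SimpleGraph {x : G // x ∉ R} where
  Adj a b := a ≠ b ∧ ¬ IsSolvable (closure ({(a : G), (b : G)} : Set G))
  symm := ⟨by
    rintro a b ⟨h1, h2⟩
    exact ⟨h1.symm, by rwa [Set.pair_comm]⟩⟩
  loopless := ⟨by rintro a ⟨h1, _⟩; exact h1 rfl⟩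

/-- Neighborhood of `x` in the non-solvable graph, as a subset of `G`. -/
def nsNbhd {G : Type*} [Group G] (R : Subgroup G) (x : G) : Set G :=
  {y | y ∉ R ∧ y ≠ x ∧ ¬ IsSolvable (closure ({x, y} : Set G))}

/-- Neighborhood of `x` in the non-solvable graph where the solvable elements are
described by `solSet`. -/
def nsNbhdSet {G : Type*} [Group G] (x : G) : Set G :=
  {y | y ∉ solSet G ∧ y ≠ x ∧ ¬ IsSolvable (closure ({x, y} : Set G))}


-- `K` embeds into `K.map fst × S` via `k ↦ (k.1, k.2)`.
theorem Subgroup.isSolvable_iff_isSolvable_map_fst {G S : Type*} [Group G] [Group S]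
    [Group.IsSolvable S] (K : Subgroup (G × S)) :
    Group.IsSolvable K ↔ Group.IsSolvable (K.map (MonoidHom.fst G S)) := by
  constructor
  · intro _
    exact Group.isSolvable_of_surjective ((MonoidHom.fst G S).subgroupMap_surjective K)
  · intro _
    refine Group.isSolvable_of_isSolvable_injective
      (f := ((MonoidHom.fst G S).subgroupMap K).prod ((MonoidHom.snd G S).comp K.subtype)) ?_
    intro a b hab
    simp only [MonoidHom.prod_apply, Prod.mk.injEq, Subtype.ext_iff] at hab
    exact Subtype.ext (Prod.ext hab.1 hab.2)

theorem stmt5_general {G S : Type*} [Group G] [Group S]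
    (hS : IsSolvable S) (x : G) (s : S) :
    solvabilizer ((x, s) : G × S) = (solvabilizer x) ×ˢ (Set.univ : Set S) := by
  have : Group.IsSolvable S := hS
  ext ⟨g, t⟩
  have hfst : (closure ({(g, t), (x, s)} : Set (G × S))).map (MonoidHom.fst G S) =
      closure {g, x} := by
    rw [MonoidHom.map_closure, Set.image_pair]
    rfl
  simp only [solvabilizer, Set.mem_ofPred_eq, Set.mem_prod, Set.mem_univ, and_true]
  rw [← hfst]
  exact Subgroup.isSolvable_iff_isSolvable_map_fst _

theorem stmt5 {G S : Type*} [Group G] [Fintype G] [Group S] [Fintype S]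
    (hG : ¬ IsSolvable G) (hS : IsSolvable S) (x : G) (s : S) :
    solvabilizer ((x, s) : G × S) = (solvabilizer x) ×ˢ (Set.univ : Set S) :=
  stmt5_general hS x s
end

section
/- The order of a finite non-solvable group G is bounded in terms of the independence number k of its non-solvable graph: |G| ≤ (3k/2)^(3k/4). Consequently, for each non-negative integer k there are only finitely many finite non-solvable groups whose non-solvable graph has independence number k. -/
open Subgroup

/-!
The vertices lying in a solvable subgroup `H` form an independent set, so `|H| ≤ |R| + k`.
For a Sylow subgroup this bounds every prime-power part of `|G|` by `|R| + k`. Since `G ⧸ R` is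
not solvable it is not of exponent two, so it has an element `q` of order at least `3`; the
preimage of `⟨q⟩` is solvable of order at least `3 |R|`, whence `2 |R| ≤ k`. So every prime power
dividing `|G|` is at most `3k/2`, and `|G| ≤ (3k/2)^t` where `t ≤ 3k/4` counts the primes up to
`3k/2` (for `k ≥ 6`); for small `k`, `|G|` divides `lcm(1, …, ⌊3k/2⌋)`.
-/

theorem Finset.card_le_half_of_forall_prime_le {s : Finset ℕ} {M : ℕ} (hM : 8 ≤ M)
    (hs : ∀ p ∈ s, p.Prime ∧ p ≤ M) : s.card ≤ M / 2 := by
  -- `p ↦ p / 2` is injective on odd primes, and `9 / 2 = 4` is free for the prime `2`.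
  let f : ℕ → ℕ := fun p => if p = 2 then 4 else p / 2
  have shape : ∀ p : ℕ, p.Prime → p = 2 ∨ (p % 2 = 1 ∧ p / 2 ≠ 4) := fun p hp => by
    refine hp.eq_two_or_odd.imp_right fun hodd => ⟨hodd, fun h4 => ?_⟩
    obtain rfl : p = 9 := by omega
    norm_num at hp
  calc s.card ≤ (Finset.Icc 1 (M / 2)).card := by
        refine Finset.card_le_card_of_injOn f (fun p hp => ?_) (fun p hp q hq hpq => ?_)
        · obtain ⟨hp, hpM⟩ := hs p hp
          have := hp.two_le
          simp only [f, Finset.coe_Icc, Set.mem_Icc]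
          split_ifs <;> omega
        · have hp := shape p (hs p hp).1
          have hq := shape q (hs q hq).1
          simp only [f] at hpq
          split_ifs at hpq <;> omega
    _ = M / 2 := by simp

theorem Nat.le_pow_card_primeFactors {n B : ℕ} (hn : n ≠ 0)
    (h : ∀ p, p.Prime → p ^ n.factorization p ≤ B) : n ≤ B ^ n.primeFactors.card :=
  calc n = ∏ p ∈ n.primeFactors, p ^ n.factorization p :=
        Nat.prod_primeFactors_pow_factorization hn
    _ ≤ B ^ n.primeFactors.card :=
      Finset.prod_le_pow_card _ _ _ fun p hp => h p (Nat.prime_of_mem_primeFactors hp)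

theorem Nat.dvd_lcm_Icc_of_pow_factorization_le {n B : ℕ} (hn : n ≠ 0)
    (h : ∀ p, p.Prime → p ^ n.factorization p ≤ B) : n ∣ (Finset.Icc 1 B).lcm id := by
  rw [Nat.dvd_iff_prime_pow_dvd_dvd]
  intro p j hp hpj
  have hmem : p ^ n.factorization p ∈ Finset.Icc 1 B :=
    Finset.mem_Icc.2 ⟨Nat.one_le_pow _ _ hp.pos, h p hp⟩
  exact (pow_dvd_pow p ((hp.pow_dvd_iff_le_factorization hn).1 hpj)).trans (Finset.dvd_lcm hmem)

theorem natCast_le_rpow_of_le_pow {n c e : ℕ} {x y : ℝ} (hn : n ≤ c) (hc : (c : ℝ) ≤ x ^ e)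
    (hx : 1 ≤ x) (he : (e : ℝ) ≤ y) : (n : ℝ) ≤ x ^ y :=
  calc (n : ℝ) ≤ c := by exact_mod_cast hn
    _ ≤ x ^ e := hc
    _ = x ^ (e : ℝ) := (Real.rpow_natCast x e).symm
    _ ≤ x ^ y := Real.rpow_le_rpow_of_exponent_le hx he

-- For `k = 2` the prime-power bound alone allows `n = 6 > 3 ^ (3 / 2)`.
theorem natCast_le_rpow_of_pow_factorization_le {n k : ℕ} (hn : n ≠ 0) (hk : 2 ≤ k) (h6 : n ≠ 6)
    (h : ∀ p, p.Prime → p ^ n.factorization p ≤ 3 * k / 2) :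
    (n : ℝ) ≤ (3 * (k : ℝ) / 2) ^ (3 * (k : ℝ) / 4) := by
  by_cases hk6 : 6 ≤ k
  · have hprimes : ∀ p ∈ n.primeFactors, p.Prime ∧ p ≤ 3 * k / 2 := fun p hp => by
      have hp' := Nat.prime_of_mem_primeFactors hp
      have hv := hp'.factorization_pos_of_dvd hn (Nat.dvd_of_mem_primeFactors hp)
      exact ⟨hp', (Nat.le_self_pow hv.ne' p).trans (h p hp')⟩
    have ht := Finset.card_le_half_of_forall_prime_le (by omega) hprimes
    refine natCast_le_rpow_of_le_pow (e := n.primeFactors.card)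
      (Nat.le_pow_card_primeFactors hn h) ?_ ?_ ?_
    · push_cast
      gcongr
      exact Nat.cast_div_le.trans (by push_cast; rfl)
    · have : (6 : ℝ) ≤ k := by exact_mod_cast hk6
      linarith
    · have : ((4 * n.primeFactors.card : ℕ) : ℝ) ≤ (3 * k : ℕ) := by exact_mod_cast (by omega)
      push_cast at this
      linarith
  · have hd := Nat.dvd_lcm_Icc_of_pow_factorization_le hn h
    interval_cases k
    · have hn3 : n ≤ 3 := by
        have hd6 : n ∣ 6 := hd.trans (by decide)
        have := Nat.le_of_dvd (by norm_num) hd6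
        interval_cases n <;> simp_all
      exact natCast_le_rpow_of_le_pow (e := 1) hn3 (by norm_num) (by norm_num) (by norm_num)
    · exact natCast_le_rpow_of_le_pow (e := 2)
        (Nat.le_of_dvd (by norm_num) (hd.trans (by decide : _ ∣ 12))) (by norm_num) (by norm_num)
        (by norm_num)
    · exact natCast_le_rpow_of_le_pow (e := 3)
        (Nat.le_of_dvd (by norm_num) (hd.trans (by decide : _ ∣ 60))) (by norm_num) (by norm_num)
        (by norm_num)
    · exact natCast_le_rpow_of_le_pow (e := 3)
        (Nat.le_of_dvd (by norm_num) (hd.trans (by decide : _ ∣ 420))) (by norm_num) (by norm_num)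
        (by norm_num)

section GroupTheory

variable {G : Type*} [Group G]

theorem isSolvable_comap_mk' (N : Subgroup G) [N.Normal] [Group.IsSolvable N]
    (H : Subgroup (G ⧸ N)) [Group.IsSolvable H] :
    Group.IsSolvable (H.comap (QuotientGroup.mk' N)) := by
  have hN : N ≤ H.comap (QuotientGroup.mk' N) := fun x hx => by
    simp [(QuotientGroup.eq_one_iff x).2 hx]
  refine Group.isSolvable_of_ker_le_range (inclusion hN)
    ((QuotientGroup.mk' N).subgroupComap H) ?_
  rintro ⟨x, hx⟩ hx1
  exact ⟨⟨x, (QuotientGroup.eq_one_iff x).1 (congrArg Subtype.val hx1)⟩, rfl⟩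

theorem card_comap_mk' [Finite G] (N : Subgroup G) [N.Normal] (H : Subgroup (G ⧸ N)) :
    Nat.card (H.comap (QuotientGroup.mk' N)) = Nat.card N * Nat.card H := by
  have hK := (H.comap (QuotientGroup.mk' N)).card_mul_index
  rw [index_comap_of_surjective H (QuotientGroup.mk'_surjective N)] at hK
  have hH : Nat.card H * H.index = N.index := H.card_mul_index
  refine Nat.eq_of_mul_eq_mul_right (Nat.pos_of_ne_zero H.index_ne_zero_of_finite) ?_
  rw [hK, mul_assoc, hH, N.card_mul_index]

theorem exists_three_le_orderOf [Finite G] (hG : ¬ Group.IsSolvable G) :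
    ∃ g : G, 3 ≤ orderOf g := by
  by_contra! h
  refine hG (Group.isSolvable_of_comm fun a b =>
    (Commute.of_orderOf_dvd_two (fun g => ?_) a b).eq)
  have := orderOf_pos g
  have := h g
  interval_cases orderOf g <;> norm_num

theorem isSolvable_of_card_eq_six (h6 : Nat.card G = 6) : Group.IsSolvable G := by
  have : Finite G := Nat.finite_of_card_ne_zero (by omega)
  have : Fact (Nat.Prime 3) := ⟨Nat.prime_three⟩
  have : Fact (Nat.Prime 2) := ⟨Nat.prime_two⟩
  obtain ⟨g, hg⟩ := exists_prime_orderOf_dvd_card' 3 (by rw [h6]; norm_num)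
  have hindex : (zpowers g).index = 2 := by
    have := (zpowers g).card_mul_index
    rw [Nat.card_zpowers, hg, h6] at this
    omega
  have := normal_of_index_eq_two hindex
  have : IsCyclic (G ⧸ zpowers g) := isCyclic_of_prime_card hindex
  exact (Group.isSolvable_iff_subgroup_quotient (zpowers g)).2 ⟨inferInstance, inferInstance⟩

end GroupTheory

section IndependenceNumber

variable {G : Type*} [Group G] {R : Subgroup G} {k : ℕ}

theorem isIndepSet_of_isSolvable {H : Subgroup G} (hH : Group.IsSolvable H) :
    (nonSolvableGraph G R).IsIndepSet {a | (a : G) ∈ H} := by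
  intro a ha b hb _ hadj
  have hle : closure {(a : G), (b : G)} ≤ H := by
    rw [closure_le]
    rintro y (rfl | rfl)
    exacts [ha, hb]
  exact hadj.2 (Group.isSolvable_of_isSolvable_injective (inclusion_injective hle))

variable [Finite G]

theorem card_le_card_add_of_isSolvable
    (hmax : ∀ s, (nonSolvableGraph G R).IsIndepSet s → s.ncard ≤ k)
    (H : Subgroup G) (hH : Group.IsSolvable H) :
    Nat.card H ≤ Nat.card R + k := by
  set s := {a : {x : G // x ∉ R} | (a : G) ∈ H}
  have hcover : (H : Set G) ⊆ (R : Set G) ∪ Subtype.val '' s := fun g hg => by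
    by_cases hgR : g ∈ R
    exacts [Or.inl hgR, Or.inr ⟨⟨g, hgR⟩, hg, rfl⟩]
  calc Nat.card H = (H : Set G).ncard := Nat.card_coe_set_eq _
    _ ≤ ((R : Set G) ∪ Subtype.val '' s).ncard := Set.ncard_le_ncard hcover
    _ ≤ (R : Set G).ncard + (Subtype.val '' s).ncard := Set.ncard_union_le _ _
    _ = Nat.card R + s.ncard := by
      rw [Set.ncard_image_of_injective _ Subtype.val_injective, ← Nat.card_coe_set_eq]
      rfl
    _ ≤ Nat.card R + k := Nat.add_le_add_left (hmax s (isIndepSet_of_isSolvable hH)) _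

theorem two_mul_card_le (hmax : ∀ s, (nonSolvableGraph G R).IsIndepSet s → s.ncard ≤ k)
    (hG : ¬ Group.IsSolvable G) (hRs : Group.IsSolvable R) (hRn : R.Normal) :
    2 * Nat.card R ≤ k := by
  have hQ : ¬ Group.IsSolvable (G ⧸ R) := fun h =>
    hG ((Group.isSolvable_iff_subgroup_quotient R).2 ⟨hRs, h⟩)
  obtain ⟨q, hq⟩ := exists_three_le_orderOf hQ
  have hK := card_le_card_add_of_isSolvable hmax _ (isSolvable_comap_mk' R (zpowers q))
  rw [card_comap_mk', Nat.card_zpowers] at hK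
  nlinarith

theorem pow_factorization_card_le
    (hmax : ∀ s, (nonSolvableGraph G R).IsIndepSet s → s.ncard ≤ k) {p : ℕ} (hp : p.Prime) :
    p ^ (Nat.card G).factorization p ≤ Nat.card R + k := by
  have := Fact.mk hp
  obtain ⟨P⟩ : Nonempty (Sylow p G) := inferInstance
  have := P.isPGroup'.isNilpotent
  rw [← P.card_eq_multiplicity]
  exact card_le_card_add_of_isSolvable hmax P inferInstance

end IndependenceNumber

theorem stmt19_general {G : Type*} [Group G] [Fintype G] (hG : ¬ IsSolvable G)
    (R : Subgroup G) (hR : IsSolvableRadical R) (k : ℕ)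
    (hmax : ∀ s : Set {x : G // x ∉ R},
      s.Pairwise (fun a b => ¬ (nonSolvableGraph G R).Adj a b) → s.ncard ≤ k) :
    (Fintype.card G : ℝ) ≤ (3 * (k : ℝ) / 2) ^ (3 * (k : ℝ) / 4) := by
  obtain ⟨hRs, hRn, -⟩ := hR
  have hr : 0 < Nat.card R := Nat.card_pos
  have h2r : 2 * Nat.card R ≤ k := two_mul_card_le hmax hG hRs hRn
  have hsylow : ∀ p, p.Prime → p ^ (Nat.card G).factorization p ≤ 3 * k / 2 := fun p hp => by
    have := pow_factorization_card_le hmax hp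
    omega
  rw [← Nat.card_eq_fintype_card]
  exact natCast_le_rpow_of_pow_factorization_le Nat.card_pos.ne' (by omega)
    (fun h6 => hG (isSolvable_of_card_eq_six h6)) hsylow

theorem stmt19 {G : Type*} [Group G] [Fintype G] (hG : ¬ IsSolvable G)
    (R : Subgroup G) (hR : IsSolvableRadical R) (k : ℕ)
    (hex : ∃ s : Set {x : G // x ∉ R},
      s.Pairwise (fun a b => ¬ (nonSolvableGraph G R).Adj a b) ∧ s.ncard = k)
    (hmax : ∀ s : Set {x : G // x ∉ R},
      s.Pairwise (fun a b => ¬ (nonSolvableGraph G R).Adj a b) → s.ncard ≤ k) :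
    (Fintype.card G : ℝ) ≤ (3 * (k : ℝ) / 2) ^ (3 * (k : ℝ) / 4) :=
  stmt19_general hG R hR k hmax
end
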